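/- arXiv:1901.05146 — 3 statements merged into one kernel-verified Lean document; each statement's English description precedes it below -/
import Mathlib

section
/- (Ingleton's Lemma) Let (K, |·|) be a spherically complete nonarchimedean valued field, let E be a K-vector space equipped with an ultrametric vector seminorm p, let F be a vector subspace of E, and let f : F → K be a K-linear map with |f(x)| ≤ p(x) for all x ∈ F. Then for every a ∈ E \ F, there exists a K-linear map f̃ : F + K•a → K extending f such that |f̃(x)| ≤ p(x) for all x ∈ F + K•a. -/
/-- A closed ball of a valued field `(K, v)`: a set of the form `{x | v (x - c) ≤ r}`
with `r ≥ 0`. -/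
def IsClosedBall {K : Type*} [Field K] (v : AbsoluteValue K ℝ) (s : Set K) : Prop :=
  ∃ (c : K) (r : ℝ), 0 ≤ r ∧ s = {x : K | v (x - c) ≤ r}

/-- A valued field `(K, v)` is spherically complete if every chain of closed balls
has nonempty intersection. -/
def SphericallyComplete {K : Type*} [Field K] (v : AbsoluteValue K ℝ) : Prop :=
  ∀ B : Set (Set K), (∀ b ∈ B, IsClosedBall v b) → IsChain (· ⊆ ·) B → (⋂₀ B).Nonempty


/-!
The value `ξ = g a` of an extension is constrained only by `|f x + ξ| ≤ p (x + a)` for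
`x ∈ F`, i.e. `ξ` must lie in the closed ball of radius `p (x + a)` around `-f x` for every
`x ∈ F`. The ultrametric inequalities make any two of these balls meet, and in an ultrametric
field two balls that meet are nested, so they form a chain; spherical completeness provides
a common point `ξ`, and homogeneity of `p` upgrades the bound at `a` to all of `F + K•a`.
-/

section Nonarchimedean

variable {K : Type*} [Field K] {v : AbsoluteValue K ℝ}

theorem IsNonarchimedean.abv_sub_le (hna : IsNonarchimedean v) (a b c : K) :
    v (a - c) ≤ max (v (a - b)) (v (b - c)) := by
  simpa using hna (a - b) (b - c)

theorem IsNonarchimedean.setOf_abv_sub_le_subset (hna : IsNonarchimedean v) {c d : K}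
    {r s : ℝ} (hrs : r ≤ s) (hcd : v (c - d) ≤ s) :
    {x | v (x - c) ≤ r} ⊆ {x | v (x - d) ≤ s} := fun x hx =>
  (hna.abv_sub_le x c d).trans (max_le (le_trans hx hrs) hcd)

theorem SphericallyComplete.exists_forall_abv_sub_le (hna : IsNonarchimedean v)
    (hsc : SphericallyComplete v) {ι : Type*} (c : ι → K) (r : ι → ℝ) (hr : ∀ i, 0 ≤ r i)
    (hc : ∀ i j, v (c i - c j) ≤ max (r i) (r j)) :
    ∃ ξ, ∀ i, v (ξ - c i) ≤ r i := by
  have hchain : IsChain (· ⊆ ·) (Set.range fun i => {x | v (x - c i) ≤ r i}) := by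
    rintro _ ⟨i, rfl⟩ _ ⟨j, rfl⟩ -
    rcases le_total (r i) (r j) with hij | hji
    · exact .inl (hna.setOf_abv_sub_le_subset hij ((hc i j).trans (max_le hij le_rfl)))
    · exact .inr (hna.setOf_abv_sub_le_subset hji ((hc j i).trans (max_le hji le_rfl)))
  obtain ⟨ξ, hξ⟩ := hsc _ (by rintro _ ⟨i, rfl⟩; exact ⟨c i, r i, hr i, rfl⟩) hchain
  exact ⟨ξ, fun i => hξ _ ⟨i, rfl⟩⟩

end Nonarchimedean

section UltrametricSeminorm

variable {K : Type*} [Field K] {v : AbsoluteValue K ℝ} {E : Type*} [AddCommGroup E]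
  [Module K E] {p : E → ℝ}

structure IsUltrametricSeminorm (v : AbsoluteValue K ℝ) (p : E → ℝ) : Prop where
  map_smul : ∀ (c : K) (x : E), p (c • x) = v c * p x
  isNonarchimedean : IsNonarchimedean p

namespace IsUltrametricSeminorm

theorem map_neg (hp : IsUltrametricSeminorm v p) (x : E) : p (-x) = p x := by
  simpa using hp.map_smul (-1) x

theorem nonneg (hp : IsUltrametricSeminorm v p) (x : E) : 0 ≤ p x := by
  have h0 : p 0 = 0 := by simpa using hp.map_smul 0 0
  have := hp.isNonarchimedean x (-x)
  rwa [add_neg_cancel, h0, hp.map_neg, max_self] at this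

theorem sub_le (hp : IsUltrametricSeminorm v p) (x y : E) : p (x - y) ≤ max (p x) (p y) := by
  simpa [sub_eq_add_neg, hp.map_neg] using hp.isNonarchimedean x (-y)

end IsUltrametricSeminorm

variable {F : Submodule K E} {f : F →ₗ[K] K}

theorem exists_forall_abv_add_le (hna : IsNonarchimedean v) (hsc : SphericallyComplete v)
    (hp : IsUltrametricSeminorm v p) (hf : ∀ x : F, v (f x) ≤ p x) (a : E) :
    ∃ ξ : K, ∀ x : F, v (f x + ξ) ≤ p (x + a) := by
  have hcentres (x y : F) : v (-f x - -f y) ≤ max (p (x + a)) (p (y + a)) := by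
    calc v (-f x - -f y) = v (f (y - x)) := by rw [f.map_sub, neg_sub_neg]
      _ ≤ p ((y + a) - (x + a)) := by simpa using hf (y - x)
      _ ≤ max (p (x + a)) (p (y + a)) := by
        rw [max_comm]; exact hp.sub_le _ _
  obtain ⟨ξ, hξ⟩ := hsc.exists_forall_abv_sub_le hna (fun x : F => -f x)
    (fun x : F => p (x + a)) (fun _ => hp.nonneg _) hcentres
  exact ⟨ξ, fun x => by simpa [add_comm] using hξ x⟩

theorem abv_add_mul_le_of_forall_abv_add_le
    (hp_smul : ∀ (c : K) (x : E), p (c • x) = v c * p x) (hf : ∀ x : F, v (f x) ≤ p x)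
    {a : E} {ξ : K} (hξ : ∀ x : F, v (f x + ξ) ≤ p (x + a)) (x : F) (c : K) :
    v (f x + c * ξ) ≤ p (x + c • a) := by
  rcases eq_or_ne c 0 with rfl | hc
  · simpa using hf x
  calc v (f x + c * ξ) = v c * v (f (c⁻¹ • x) + ξ) := by
        rw [← map_mul, map_smul, smul_eq_mul, mul_add, mul_inv_cancel_left₀ hc]
    _ ≤ v c * p ((c⁻¹ • x : F) + a) := by gcongr; exact hξ _
    _ = p (x + c • a) := by
        rw [← hp_smul, Submodule.coe_smul, smul_add, smul_inv_smul₀ hc]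

end UltrametricSeminorm

/-- **Ingleton's Lemma.** Let `(K, v)` be a spherically complete
nonarchimedean valued field, let `E` be a `K`-vector space equipped with an ultrametric
vector seminorm `p`, let `F` be a vector subspace of `E`, and let `f : F → K` be a
`K`-linear map with `v (f x) ≤ p x` for all `x ∈ F`.  Then for every `a ∈ E \ F` there
exists a `K`-linear map `f̃ : F + K•a → K` extending `f` such that `v (f̃ x) ≤ p x` for
all `x ∈ F + K•a`. -/
theorem ingleton_lemma (K : Type u) [Field K] (v : AbsoluteValue K ℝ)
    (hna : ∀ x y : K, v (x + y) ≤ max (v x) (v y))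
    (hsc : SphericallyComplete v)
    (E : Type w) [AddCommGroup E] [Module K E] (p : E → ℝ)
    (hp_smul : ∀ (c : K) (x : E), p (c • x) = v c * p x)
    (hp_ultra : ∀ x y : E, p (x + y) ≤ max (p x) (p y))
    (F : Submodule K E) (f : F →ₗ[K] K) (hf : ∀ x : F, v (f x) ≤ p x)
    (a : E) (ha : a ∉ F) :
    ∃ g : ↥(F ⊔ Submodule.span K {a}) →ₗ[K] K,
      (∀ (x : E) (hx : x ∈ F), g ⟨x, Submodule.mem_sup_left hx⟩ = f ⟨x, hx⟩) ∧
        ∀ y : ↥(F ⊔ Submodule.span K {a}), v (g y) ≤ p y := by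
  obtain ⟨ξ, hξ⟩ := exists_forall_abv_add_le hna hsc ⟨hp_smul, hp_ultra⟩ hf a
  let g : ↥(F ⊔ Submodule.span K {a}) →ₗ[K] K :=
    (LinearPMap.supSpanSingleton ⟨F, f⟩ a ξ ha).toFun
  have hg (x : E) (hx : x ∈ F) (c : K)
      (hy : x + c • a ∈ F ⊔ Submodule.span K {a}) : g ⟨x + c • a, hy⟩ = f ⟨x, hx⟩ + c * ξ :=
    LinearPMap.supSpanSingleton_apply_mk ⟨F, f⟩ a ξ ha x hx c
  refine ⟨g, fun x hx => by
    simpa using hg x hx 0 (by simpa using Submodule.mem_sup_left hx), ?_⟩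
  rintro ⟨_, hy⟩
  obtain ⟨x, hx, _, hca, rfl⟩ := Submodule.mem_sup.1 hy
  obtain ⟨c, rfl⟩ := Submodule.mem_span_singleton.1 hca
  rw [hg x hx c]
  exact abv_add_mul_le_of_forall_abv_add_le hp_smul hf hξ ⟨x, hx⟩ c
end

section
/- Let K be a field equipped with the trivial absolute value (|x| = 1 for x ≠ 0, |0| = 0). On the polynomial ring K[X], let p be the trivial norm (p(P) = 1 for P ≠ 0, p(0) = 0) and let q : K[X] → ℝ be defined by q(P) = deg(P) + 1 for P ≠ 0 and q(0) = 0. Then q is an ultrametric vector seminorm on the K-vector space K[X] with respect to the trivial absolute value, the identity map Id : (K[X], p) → (K[X], q) is continuous for the topologies induced by p and q, but Id is not bounded: there is no M ∈ ℝ such that q(P) ≤ M · p(P) for all P ∈ K[X]. -/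
/-!
Since `p` is `1` off `0`, its balls of radius `1` are singletons, so `p` induces the discrete
topology and every map out of `(R[X], p)` is continuous. Boundedness fails along `X ^ n`:
`p (X ^ n) = 1` while `q (X ^ n) = n + 1`.
-/

open scoped Topology

theorem eq_bot_of_forall_ne_zero_le {E : Type*} [AddGroup E] (p : E → ℝ) {δ : ℝ} (hδ : 0 < δ)
    (hp : ∀ x : E, x ≠ 0 → δ ≤ p x) (τ : TopologicalSpace E)
    (hτ : ∀ s : Set E, IsOpen[τ] s ↔ ∀ x ∈ s, ∃ ε > 0, {y : E | p (y - x) < ε} ⊆ s) :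
    τ = ⊥ := by
  refine eq_bot_of_singletons_open fun x => (hτ {x}).2 ?_
  rintro x rfl
  refine ⟨δ, hδ, fun y hy => ?_⟩
  by_contra hyx
  exact (hp (y - x) (sub_ne_zero.2 hyx)).not_gt hy

namespace Polynomial

variable {R : Type*} [Semiring R]

open Classical in
noncomputable def degreeNorm (P : R[X]) : ℝ :=
  if P = 0 then 0 else P.natDegree + 1

theorem degreeNorm_of_ne_zero {P : R[X]} (hP : P ≠ 0) : degreeNorm P = P.natDegree + 1 :=
  if_neg hP

theorem degreeNorm_nonneg (P : R[X]) : 0 ≤ degreeNorm P := by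
  unfold degreeNorm
  split_ifs <;> positivity

theorem degreeNorm_smul [IsDomain R] {c : R} (hc : c ≠ 0) (P : R[X]) : degreeNorm (c • P) = degreeNorm P := by
  by_cases hP : P = 0
  · rw [hP, smul_zero]
  · rw [degreeNorm_of_ne_zero hP, degreeNorm_of_ne_zero (smul_ne_zero hc hP), natDegree_smul P hc]

theorem degreeNorm_add_le (P Q : R[X]) :
    degreeNorm (P + Q) ≤ max (degreeNorm P) (degreeNorm Q) := by
  by_cases hPQ : P + Q = 0
  · simpa [hPQ, degreeNorm] using le_max_of_le_left (degreeNorm_nonneg P)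
  by_cases hP : P = 0
  · simp [hP]
  by_cases hQ : Q = 0
  · simp [hQ]
  rw [degreeNorm_of_ne_zero hPQ, degreeNorm_of_ne_zero hP, degreeNorm_of_ne_zero hQ,
    max_add_add_right, ← Nat.cast_max]
  gcongr
  exact natDegree_add_le P Q

theorem exists_ne_zero_lt_degreeNorm [Nontrivial R] (M : ℝ) : ∃ P : R[X], P ≠ 0 ∧ M < degreeNorm P := by
  refine ⟨X ^ ⌈M⌉₊, (monic_X_pow _).ne_zero, ?_⟩
  rw [degreeNorm_of_ne_zero (monic_X_pow _).ne_zero, natDegree_X_pow]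
  linarith [Nat.le_ceil M]

theorem eq_degreeNorm {q : R[X] → ℝ} (hq0 : q 0 = 0)
    (hq1 : ∀ P : R[X], P ≠ 0 → q P = (P.natDegree : ℝ) + 1) : q = degreeNorm := by
  funext P
  by_cases hP : P = 0
  · simp [hP, hq0, degreeNorm]
  · rw [hq1 P hP, degreeNorm_of_ne_zero hP]

end Polynomial

open Polynomial in
theorem continuous_not_bounded_example_general (K : Type u) [Field K]
    (p q : Polynomial K → ℝ)
    (hp1 : ∀ P : Polynomial K, P ≠ 0 → p P = 1)
    (hq0 : q 0 = 0)
    (hq1 : ∀ P : Polynomial K, P ≠ 0 → q P = (P.natDegree : ℝ) + 1)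
    (τp τq : TopologicalSpace (Polynomial K))
    (hτp : ∀ s : Set (Polynomial K),
      IsOpen[τp] s ↔ ∀ P ∈ s, ∃ ε > 0, {Q : Polynomial K | p (Q - P) < ε} ⊆ s) :
    (q 0 = 0 ∧ (∀ (c : K) (P : Polynomial K), c ≠ 0 → q (c • P) = q P) ∧
        ∀ P Q : Polynomial K, q (P + Q) ≤ max (q P) (q Q)) ∧
      Continuous[τp, τq] id ∧
      ¬ ∃ M : ℝ, ∀ P : Polynomial K, q P ≤ M * p P := by
  obtain rfl := eq_degreeNorm hq0 hq1
  obtain rfl : τp = ⊥ := eq_bot_of_forall_ne_zero_le p one_pos (fun P hP => (hp1 P hP).ge) τp hτp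
  refine ⟨⟨hq0, fun c P hc => degreeNorm_smul hc P, degreeNorm_add_le⟩, continuous_bot, ?_⟩
  rintro ⟨M, hM⟩
  obtain ⟨P, hP, hMP⟩ := exists_ne_zero_lt_degreeNorm (R := K) M
  have := hM P
  rw [hp1 P hP, mul_one] at this
  linarith

/-- Let `K` be a field equipped with the trivial absolute value
(`|x| = 1` for `x ≠ 0`, `|0| = 0`).  On the polynomial ring `K[X]`, let `p` be the
trivial norm (`p P = 1` for `P ≠ 0`, `p 0 = 0`) and let `q P = deg P + 1` for `P ≠ 0`,
`q 0 = 0`.  Then `q` is an ultrametric vector seminorm on `K[X]` with respect to the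
trivial absolute value, the identity map `Id : (K[X], p) → (K[X], q)` is continuous for
the topologies induced by `p` and `q`, but `Id` is not bounded: there is no `M : ℝ`
with `q P ≤ M * p P` for all `P`. -/
theorem continuous_not_bounded_example (K : Type u) [Field K]
    (p q : Polynomial K → ℝ)
    (hp0 : p 0 = 0) (hp1 : ∀ P : Polynomial K, P ≠ 0 → p P = 1)
    (hq0 : q 0 = 0)
    (hq1 : ∀ P : Polynomial K, P ≠ 0 → q P = (P.natDegree : ℝ) + 1)
    (τp τq : TopologicalSpace (Polynomial K))
    (hτp : ∀ s : Set (Polynomial K),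
      IsOpen[τp] s ↔ ∀ P ∈ s, ∃ ε > 0, {Q : Polynomial K | p (Q - P) < ε} ⊆ s)
    (hτq : ∀ s : Set (Polynomial K),
      IsOpen[τq] s ↔ ∀ P ∈ s, ∃ ε > 0, {Q : Polynomial K | q (Q - P) < ε} ⊆ s) :
    (q 0 = 0 ∧ (∀ (c : K) (P : Polynomial K), c ≠ 0 → q (c • P) = q P) ∧
        ∀ P Q : Polynomial K, q (P + Q) ≤ max (q P) (q Q)) ∧
      Continuous[τp, τq] id ∧
      ¬ ∃ M : ℝ, ∀ P : Polynomial K, q P ≤ M * p P :=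
  continuous_not_bounded_example_general K p q hp1 hq0 hq1 τp τq hτp
end

section
/- Let (K, |·|) be a spherically complete nonarchimedean valued field. Then Ingleton's statement I_(K,|·|) is equivalent to the isometric linear extender statement LE_(K,|·|): for every K-vector space E equipped with an ultrametric vector seminorm p and every vector subspace F of E, there exists a K-linear map T : BL(F,K) → BL(E,K) such that for every bounded linear form f on F, T(f) extends f and ‖T(f)‖ = ‖f‖. -/
variable {K : Type u} [Field K] (v : AbsoluteValue K ℝ)

/-- The space `BL(E, K)` of bounded linear forms on a seminormed `K`-vector space
`(E, p)`, i.e. the linear forms `f : E → K` for which there exists `M : ℝ` with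
`v (f x) ≤ M * p x` for all `x`. -/
def BddLin (E : Type u) [AddCommGroup E] [Module K E] (p : E → ℝ) :
    Submodule K (E →ₗ[K] K) where
  carrier := {f | ∃ M : ℝ, ∀ x : E, v (f x) ≤ M * p x}
  zero_mem' := ⟨0, fun x => by simp⟩
  add_mem' := by
    rintro f g ⟨M, hM⟩ ⟨N, hN⟩
    refine ⟨M + N, fun x => ?_⟩
    have h1 := hM x
    have h2 := hN x
    simp only [LinearMap.add_apply]
    calc v (f x + g x) ≤ v (f x) + v (g x) := v.add_le _ _
      _ ≤ (M + N) * p x := by ring_nf; linarith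
  smul_mem' := by
    rintro c f ⟨M, hM⟩
    refine ⟨v c * M, fun x => ?_⟩
    simp only [LinearMap.smul_apply, smul_eq_mul, map_mul]
    calc v c * v (f x) ≤ v c * (M * p x) :=
          mul_le_mul_of_nonneg_left (hM x) (v.nonneg c)
      _ = v c * M * p x := by ring

/-- The operator seminorm of a bounded linear form on `(E, p)`:
`‖f‖ = inf {M ≥ 0 | ∀ x, v (f x) ≤ M * p x}`. -/
noncomputable def opSemin (E : Type u) [AddCommGroup E] [Module K E] (p : E → ℝ)
    (f : E →ₗ[K] K) : ℝ :=
  sInf {M : ℝ | 0 ≤ M ∧ ∀ x : E, v (f x) ≤ M * p x}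

/-!
Ingleton's property extends all bounded forms on `F` at once, linearly, if it is applied to a
single functional on a tensor product. Put on `BL(F,K) ⊗ E` the ultrametric projective seminorm
`q z = inf maxᵢ ‖gᵢ‖ p(xᵢ)` over representations `z = ∑ gᵢ ⊗ xᵢ`, extend `f ⊗ y ↦ f y` from
`BL(F,K) ⊗ F` to a `q`-bounded `G`, and set `T f = G (f ⊗ ·)`; then `‖T f‖ ≤ ‖f‖` because
`q (f ⊗ x) ≤ ‖f‖ p(x)`, and `‖f‖ ≤ ‖T f‖` because `T f` extends `f`.

The functional is `q`-bounded on `BL(F,K) ⊗ F` because any representation can be made to have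
linearly independent `gᵢ` without increasing `maxᵢ ‖gᵢ‖ p(xᵢ)`: in a relation `∑ cᵢ gᵢ = 0`,
eliminate the `gᵢ` of largest weight `|cᵢ| ‖gᵢ‖`, absorbing it into the other terms by the
ultrametric inequality for `p`. Once the `gᵢ` are independent, all `xᵢ` lie in `F`.

Conversely, `T f` extends a form `f` with `|f| ≤ p` and `‖T f‖ = ‖f‖ ≤ 1`.
-/

open TensorProduct
open scoped Pointwise

section UltraSeminorm

variable {E : Type*} [AddCommGroup E] [Module K E]

structure IsUltraSeminorm (p : E → ℝ) : Prop where
  map_smul : ∀ (c : K) (x : E), p (c • x) = v c * p x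
  isNonarchimedean : IsNonarchimedean p

variable {v} {p : E → ℝ}

namespace IsUltraSeminorm

theorem map_zero (hp : IsUltraSeminorm v p) : p 0 = 0 := by
  simpa using hp.map_smul 0 0

theorem map_neg (hp : IsUltraSeminorm v p) (x : E) : p (-x) = p x := by
  simpa using hp.map_smul (-1) x

theorem nonneg (hp : IsUltraSeminorm v p) (x : E) : 0 ≤ p x := by
  simpa [hp.map_zero, hp.map_neg] using hp.isNonarchimedean x (-x)

theorem add_smul_le (hp : IsUltraSeminorm v p) (x y : E) (c : K) :
    p (x + c • y) ≤ max (p x) (v c * p y) :=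
  hp.map_smul c y ▸ hp.isNonarchimedean x (c • y)

theorem restrict (hp : IsUltraSeminorm v p) (F : Submodule K E) :
    IsUltraSeminorm v fun x : F => p x :=
  ⟨fun c x => hp.map_smul c x, fun x y => hp.isNonarchimedean x y⟩

end IsUltraSeminorm

end UltraSeminorm

section OperatorSeminorm

variable {v} {E : Type u} [AddCommGroup E] [Module K E] {p : E → ℝ} {f : E →ₗ[K] K}

theorem opSemin_nonneg : 0 ≤ opSemin v E p f :=
  Real.sInf_nonneg fun _ hM => hM.1

theorem opSemin_le {M : ℝ} (hM₀ : 0 ≤ M) (hM : ∀ x, v (f x) ≤ M * p x) : opSemin v E p f ≤ M :=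
  csInf_le ⟨0, fun _ hM => hM.1⟩ ⟨hM₀, hM⟩

theorem apply_le_opSemin_mul (hp : IsUltraSeminorm v p) (hf : f ∈ BddLin v E p) (x : E) :
    v (f x) ≤ opSemin v E p f * p x := by
  obtain ⟨M, hM⟩ := hf
  have hbound : ∀ y, v (f y) ≤ max M 0 * p y := fun y =>
    (hM y).trans (mul_le_mul_of_nonneg_right (le_max_left M 0) (hp.nonneg y))
  have hne : {M : ℝ | 0 ≤ M ∧ ∀ x : E, v (f x) ≤ M * p x}.Nonempty :=
    ⟨_, le_max_right M 0, hbound⟩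
  rcases (hp.nonneg x).eq_or_lt with hx | hx
  · simpa [← hx] using hbound x
  · rw [← div_le_iff₀ hx]
    exact le_csInf hne fun M hM => (div_le_iff₀ hx).2 (hM.2 x)

end OperatorSeminorm

section TensorRepresentation

variable {M N E ι : Type*} [AddCommGroup M] [Module K M] [AddCommGroup N] [Module K N]
  [AddCommGroup E] [Module K E] {g : ι → M} {s : Finset ι}

theorem LinearIndepOn.eq_zero_of_sum_tmul_eq_zero (hg : LinearIndepOn K g s) {y : ι → N}
    (h : ∑ j ∈ s, g j ⊗ₜ[K] y j = 0) {i : ι} (hi : i ∈ s) : y i = 0 := by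
  classical
  obtain ⟨φ, hφi, hφ⟩ :=
    Submodule.exists_dual_map_eq_bot_of_notMem (hg.notMem_span hi) inferInstance
  have hφ_other : ∀ j ∈ s, j ≠ i → φ (g j) = 0 := fun j hj hji => by
    have hmem := Submodule.mem_map_of_mem (f := φ)
      (Submodule.subset_span ⟨j, ⟨hj, hji⟩, rfl⟩ : g j ∈ Submodule.span K (g '' (s \ {i})))
    rw [hφ] at hmem
    exact (Submodule.mem_bot K).1 hmem
  have hsum := congrArg (TensorProduct.lid K N ∘ LinearMap.rTensor N φ) h
  simp only [Function.comp_apply, map_sum, LinearMap.rTensor_tmul, TensorProduct.lid_tmul,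
    map_zero] at hsum
  rw [Finset.sum_eq_single_of_mem i hi fun j hj hji => by rw [hφ_other j hj hji, zero_smul]] at hsum
  exact (smul_eq_zero.1 hsum).resolve_left hφi

theorem LinearIndepOn.mem_of_sum_tmul_mem_range (hg : LinearIndepOn K g s) {F : Submodule K E}
    {x : ι → E} (hx : ∑ j ∈ s, g j ⊗ₜ[K] x j ∈ LinearMap.range (F.subtype.lTensor M)) {i : ι}
    (hi : i ∈ s) : x i ∈ F := by
  obtain ⟨w, hw⟩ := hx
  have hquot : ∑ j ∈ s, g j ⊗ₜ[K] F.mkQ (x j) = 0 := by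
    have hmkQ : F.mkQ ∘ₗ F.subtype = 0 := by ext; simp
    have := congrArg (F.mkQ.lTensor M) hw
    rw [← LinearMap.lTensor_comp_apply, hmkQ, LinearMap.lTensor_zero, map_sum] at this
    simpa using this.symm
  simpa using hg.eq_zero_of_sum_tmul_eq_zero hquot hi

end TensorRepresentation

section Reduction

variable {v} {M E ι : Type*} [AddCommGroup M] [Module K M] [AddCommGroup E] [Module K E]
  {n : M → ℝ} {p : E → ℝ} {g : ι → M} {s : Finset ι}

theorem exists_eq_sum_smul_of_not_linearIndepOn [DecidableEq ι] (hn : ∀ m, 0 ≤ n m)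
    (hs : ¬LinearIndepOn K g s) :
    ∃ i₀ ∈ s, ∃ a : ι → K, g i₀ = ∑ i ∈ s.erase i₀, a i • g i ∧
      ∀ i ∈ s.erase i₀, v (a i) * n (g i) ≤ n (g i₀) := by
  classical
  obtain ⟨c, hc, i₁, hi₁, hci₁⟩ := not_linearIndepOn_finset_iff.1 hs
  obtain ⟨i₀, hi₀, hmax⟩ := (s.filter (c · ≠ 0)).exists_max_image (fun i => v (c i) * n (g i))
    ⟨i₁, Finset.mem_filter.2 ⟨hi₁, hci₁⟩⟩
  obtain ⟨hi₀s, hci₀⟩ := Finset.mem_filter.1 hi₀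
  refine ⟨i₀, hi₀s, fun i => -(c i₀)⁻¹ * c i, ?_, fun i hi => ?_⟩
  · rw [← Finset.add_sum_erase s _ hi₀s] at hc
    simp_rw [← smul_smul, ← Finset.smul_sum, eq_neg_of_add_eq_zero_right hc, neg_smul,
      smul_neg, neg_neg, inv_smul_smul₀ hci₀]
  · by_cases hci : c i = 0
    · simp [hci, hn]
    have hle := hmax i (Finset.mem_filter.2 ⟨Finset.mem_of_mem_erase hi, hci⟩)
    rw [map_mul, v.map_neg, map_inv₀, ← div_eq_inv_mul, div_mul_eq_mul_div,
      div_le_iff₀ (v.pos hci₀)]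
    linarith

theorem exists_sum_erase_tmul_eq [DecidableEq ι] (hp : IsUltraSeminorm v p) (hn : ∀ m, 0 ≤ n m)
    (hs : ¬LinearIndepOn K g s) {x : ι → E} {r : ℝ} (hx : ∀ i ∈ s, n (g i) * p (x i) ≤ r) :
    ∃ i₀ ∈ s, ∃ x' : ι → E, ∑ i ∈ s.erase i₀, g i ⊗ₜ[K] x' i = ∑ i ∈ s, g i ⊗ₜ[K] x i ∧
      ∀ i ∈ s.erase i₀, n (g i) * p (x' i) ≤ r := by
  obtain ⟨i₀, hi₀, a, hg, ha⟩ := exists_eq_sum_smul_of_not_linearIndepOn (v := v) hn hs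
  refine ⟨i₀, hi₀, fun i => x i + a i • x i₀, ?_, fun i hi => ?_⟩
  · rw [← Finset.sum_erase_add s _ hi₀, hg, sum_tmul]
    simp only [tmul_add, Finset.sum_add_distrib, tmul_smul, smul_tmul']
  · calc n (g i) * p (x i + a i • x i₀)
        ≤ n (g i) * max (p (x i)) (v (a i) * p (x i₀)) :=
          mul_le_mul_of_nonneg_left (hp.add_smul_le _ _ _) (hn _)
      _ = max (n (g i) * p (x i)) (v (a i) * n (g i) * p (x i₀)) := by
          rw [mul_max_of_nonneg _ _ (hn _)]
          ring_nf
      _ ≤ r := max_le (hx i (Finset.mem_of_mem_erase hi))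
          ((mul_le_mul_of_nonneg_right (ha i hi) (hp.nonneg _)).trans (hx i₀ hi₀))

theorem exists_linearIndepOn_sum_tmul_eq (hp : IsUltraSeminorm v p) (hn : ∀ m, 0 ≤ n m)
    (g : ι → M) (s : Finset ι) {x : ι → E} {r : ℝ} (hx : ∀ i ∈ s, n (g i) * p (x i) ≤ r) :
    ∃ t ⊆ s, ∃ x' : ι → E, LinearIndepOn K g t ∧
      ∑ i ∈ t, g i ⊗ₜ[K] x' i = ∑ i ∈ s, g i ⊗ₜ[K] x i ∧ ∀ i ∈ t, n (g i) * p (x' i) ≤ r := by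
  classical
  induction s using Finset.strongInduction generalizing x with
  | H s ih =>
    by_cases hs : LinearIndepOn K g s
    · exact ⟨s, subset_rfl, x, hs, rfl, hx⟩
    obtain ⟨i₀, hi₀, x', hsum, hx'⟩ := exists_sum_erase_tmul_eq hp hn hs hx
    obtain ⟨t, hts, x'', ht, hsum', hx''⟩ := ih _ (Finset.erase_ssubset hi₀) hx'
    exact ⟨t, hts.trans (s.erase_subset i₀), x'', ht, hsum'.trans hsum, hx''⟩

end Reduction

section ProjectiveSeminorm

variable {M E : Type*} [AddCommGroup M] [Module K M] [AddCommGroup E] [Module K E]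
  (n : M → ℝ) (p : E → ℝ)

def IsTensorReprBound (z : M ⊗[K] E) (r : ℝ) : Prop :=
  0 ≤ r ∧ ∃ (k : ℕ) (g : Fin k → M) (x : Fin k → E),
    ∑ i, g i ⊗ₜ[K] x i = z ∧ ∀ i, n (g i) * p (x i) ≤ r

/-- The ultrametric analogue of the projective tensor seminorm. -/
noncomputable def ultraProjSemin (z : M ⊗[K] E) : ℝ :=
  sInf {r | IsTensorReprBound n p z r}

variable {v n p}

theorem isTensorReprBound_zero : IsTensorReprBound n p (0 : M ⊗[K] E) 0 :=
  ⟨le_rfl, 0, Fin.elim0, Fin.elim0, by simp, fun i => i.elim0⟩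

theorem isTensorReprBound_tmul (hn : ∀ m, 0 ≤ n m) (hp : ∀ x, 0 ≤ p x) (g : M) (x : E) :
    IsTensorReprBound n p (g ⊗ₜ[K] x) (n g * p x) :=
  ⟨mul_nonneg (hn g) (hp x), 1, fun _ => g, fun _ => x, by simp, fun _ => le_rfl⟩

theorem IsTensorReprBound.add {z w : M ⊗[K] E} {r r' : ℝ} (hz : IsTensorReprBound n p z r)
    (hw : IsTensorReprBound n p w r') : IsTensorReprBound n p (z + w) (max r r') := by
  obtain ⟨hr, k, g, x, rfl, hbd⟩ := hz
  obtain ⟨-, k', g', x', rfl, hbd'⟩ := hw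
  refine ⟨hr.trans (le_max_left _ _), k + k', Fin.append g g', Fin.append x x', ?_, ?_⟩
  · simp [Fin.sum_univ_add]
  · refine Fin.addCases (fun i => ?_) (fun i => ?_)
    · simpa using (hbd i).trans (le_max_left _ _)
    · simpa using (hbd' i).trans (le_max_right _ _)

theorem IsTensorReprBound.smul (hp : IsUltraSeminorm v p) {z : M ⊗[K] E} {r : ℝ}
    (hz : IsTensorReprBound n p z r) (c : K) : IsTensorReprBound n p (c • z) (v c * r) := by
  obtain ⟨hr, k, g, x, rfl, hbd⟩ := hz
  refine ⟨mul_nonneg (v.nonneg c) hr, k, g, fun i => c • x i, ?_, fun i => ?_⟩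
  · simp [Finset.smul_sum, tmul_smul]
  · rw [hp.map_smul, mul_left_comm]
    exact mul_le_mul_of_nonneg_left (hbd i) (v.nonneg c)

theorem exists_isTensorReprBound (hn : ∀ m, 0 ≤ n m) (hp : ∀ x, 0 ≤ p x) (z : M ⊗[K] E) :
    ∃ r, IsTensorReprBound n p z r := by
  induction z using TensorProduct.induction_on with
  | zero => exact ⟨0, isTensorReprBound_zero⟩
  | tmul g x => exact ⟨_, isTensorReprBound_tmul hn hp g x⟩
  | add z w hz hw =>
    obtain ⟨r, hr⟩ := hz
    obtain ⟨r', hr'⟩ := hw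
    exact ⟨_, hr.add hr'⟩

theorem ultraProjSemin_le {z : M ⊗[K] E} {r : ℝ} (hr : IsTensorReprBound n p z r) :
    ultraProjSemin n p z ≤ r :=
  csInf_le ⟨0, fun _ h => h.1⟩ hr

theorem ultraProjSemin_tmul_le (hn : ∀ m, 0 ≤ n m) (hp : ∀ x, 0 ≤ p x) (g : M) (x : E) :
    ultraProjSemin n p (g ⊗ₜ[K] x) ≤ n g * p x :=
  ultraProjSemin_le (isTensorReprBound_tmul hn hp g x)

theorem ultraProjSemin_smul (hp : IsUltraSeminorm v p) (c : K) (z : M ⊗[K] E) :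
    ultraProjSemin n p (c • z) = v c * ultraProjSemin n p z := by
  rcases eq_or_ne c 0 with rfl | hc
  · rw [zero_smul, map_zero, zero_mul]
    exact (ultraProjSemin_le isTensorReprBound_zero).antisymm (Real.sInf_nonneg fun _ h => h.1)
  have hbounds :
      {r | IsTensorReprBound n p (c • z) r} = v c • {r | IsTensorReprBound n p z r} := by
    ext r
    refine ⟨fun h => ⟨v c⁻¹ * r, ?_, ?_⟩, ?_⟩
    · simpa [smul_smul, inv_mul_cancel₀ hc] using h.smul hp c⁻¹
    · simp [map_inv₀, ← mul_assoc, mul_inv_cancel₀ (v.ne_zero hc)]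
    · rintro ⟨r', hr', rfl⟩
      exact hr'.smul hp c
  rw [ultraProjSemin, hbounds, Real.sInf_smul_of_nonneg (v.nonneg c), smul_eq_mul]
  rfl

theorem ultraProjSemin_add_le (hn : ∀ m, 0 ≤ n m) (hp : ∀ x, 0 ≤ p x) (z w : M ⊗[K] E) :
    ultraProjSemin n p (z + w) ≤ max (ultraProjSemin n p z) (ultraProjSemin n p w) := by
  by_contra! hlt
  obtain ⟨r, hr, hrlt⟩ := exists_lt_of_csInf_lt (exists_isTensorReprBound hn hp z)
    ((le_max_left _ _).trans_lt hlt)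
  obtain ⟨r', hr', hr'lt⟩ := exists_lt_of_csInf_lt (exists_isTensorReprBound hn hp w)
    ((le_max_right _ _).trans_lt hlt)
  exact (max_lt hrlt hr'lt).not_ge (ultraProjSemin_le (IsTensorReprBound.add hr hr'))

theorem isUltraSeminorm_ultraProjSemin (hn : ∀ m, 0 ≤ n m) (hp : IsUltraSeminorm v p) :
    IsUltraSeminorm v (ultraProjSemin (K := K) n p) :=
  ⟨ultraProjSemin_smul hp, ultraProjSemin_add_le hn hp.nonneg⟩

end ProjectiveSeminorm

section Extension

variable {v} {M E : Type*} [AddCommGroup M] [Module K M] [AddCommGroup E] [Module K E]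
  {n : M → ℝ} {p : E → ℝ} {F : Submodule K E}

theorem abv_lift_le_of_isTensorReprBound (hna : IsNonarchimedean v) (hp : IsUltraSeminorm v p)
    (hn : ∀ m, 0 ≤ n m) {B : M →ₗ[K] F →ₗ[K] K} (hB : ∀ g (y : F), v (B g y) ≤ n g * p y)
    {w : M ⊗[K] F} {r : ℝ} (hr : IsTensorReprBound n p (F.subtype.lTensor M w) r) :
    v (lift B w) ≤ r := by
  obtain ⟨hr₀, k, g, x, hrepr, hbd⟩ := hr
  obtain ⟨t, -, x', hg, hsum, hbd'⟩ :=
    exists_linearIndepOn_sum_tmul_eq hp hn g Finset.univ fun i _ => hbd i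
  have hmem : ∀ i ∈ t, ∃ y : F, (y : E) = x' i := fun i hi =>
    ⟨⟨x' i, hg.mem_of_sum_tmul_mem_range ⟨w, hrepr.symm.trans hsum.symm⟩ hi⟩, rfl⟩
  choose! y hy using hmem
  have hw : w = ∑ i ∈ t, g i ⊗ₜ[K] y i := by
    refine Module.Flat.lTensor_preserves_injective_linearMap _ F.injective_subtype ?_
    rw [← hrepr, ← hsum, map_sum]
    exact Finset.sum_congr rfl fun i hi => by simp [hy i hi]
  rw [hw, map_sum]
  rcases t.eq_empty_or_nonempty with rfl | ht
  · simpa using hr₀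
  obtain ⟨i, hi, hle⟩ := hna.finset_image_add_of_nonempty (fun i => lift B (g i ⊗ₜ[K] y i)) ht
  calc v (∑ i ∈ t, lift B (g i ⊗ₜ[K] y i)) ≤ v (B (g i) (y i)) := by simpa using hle
    _ ≤ n (g i) * p (x' i) := hy i hi ▸ hB (g i) (y i)
    _ ≤ r := hbd' i hi

theorem abv_lift_le_ultraProjSemin (hna : IsNonarchimedean v) (hp : IsUltraSeminorm v p)
    (hn : ∀ m, 0 ≤ n m) {B : M →ₗ[K] F →ₗ[K] K} (hB : ∀ g (y : F), v (B g y) ≤ n g * p y)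
    (w : M ⊗[K] F) : v (lift B w) ≤ ultraProjSemin n p (F.subtype.lTensor M w) :=
  le_csInf (exists_isTensorReprBound hn hp.nonneg _) fun _ hr =>
    abv_lift_le_of_isTensorReprBound hna hp hn hB hr

end Extension

/-- Ingleton's statement `I_(K,v)`. -/
def IngletonProperty : Prop :=
  ∀ (E : Type u) [AddCommGroup E] [Module K E] (p : E → ℝ), IsUltraSeminorm v p →
    ∀ (F : Submodule K E) (f : F →ₗ[K] K), (∀ x : F, v (f x) ≤ p x) →
      ∃ g : E →ₗ[K] K, (∀ x : F, g x = f x) ∧ ∀ x, v (g x) ≤ p x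

namespace IngletonProperty

variable {v} {E : Type u} [AddCommGroup E] [Module K E] {p : E → ℝ}

theorem exists_extend_of_injective (hI : IngletonProperty v) (hp : IsUltraSeminorm v p)
    {W : Type*} [AddCommGroup W] [Module K W] {j : W →ₗ[K] E} (hj : Function.Injective j)
    (ψ : W →ₗ[K] K) (hψ : ∀ w, v (ψ w) ≤ p (j w)) :
    ∃ G : E →ₗ[K] K, G ∘ₗ j = ψ ∧ ∀ x, v (G x) ≤ p x := by
  let e := LinearEquiv.ofInjective j hj
  obtain ⟨G, hG, hGp⟩ := hI E p hp (LinearMap.range j) (ψ ∘ₗ e.symm.toLinearMap) fun z => by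
    obtain ⟨w, rfl⟩ := e.surjective z
    simpa [e] using hψ w
  exact ⟨G, LinearMap.ext fun w => by simpa [e] using hG (e w), hGp⟩

theorem exists_bilinear_extension (hna : IsNonarchimedean v) (hI : IngletonProperty v)
    (hp : IsUltraSeminorm v p) {M : Type u} [AddCommGroup M] [Module K M] {n : M → ℝ}
    (hn : ∀ m, 0 ≤ n m) {F : Submodule K E} (B : M →ₗ[K] F →ₗ[K] K)
    (hB : ∀ g (y : F), v (B g y) ≤ n g * p y) :
    ∃ B' : M →ₗ[K] E →ₗ[K] K,
      (∀ g (y : F), B' g y = B g y) ∧ ∀ g x, v (B' g x) ≤ n g * p x := by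
  obtain ⟨G, hGB, hG⟩ := hI.exists_extend_of_injective (isUltraSeminorm_ultraProjSemin hn hp)
    (Module.Flat.lTensor_preserves_injective_linearMap _ F.injective_subtype) (lift B)
    (abv_lift_le_ultraProjSemin hna hp hn hB)
  refine ⟨(TensorProduct.mk K M E).compr₂ G, fun g y => ?_, fun g x =>
    (hG _).trans (ultraProjSemin_tmul_le hn hp.nonneg g x)⟩
  simpa using LinearMap.congr_fun hGB (g ⊗ₜ y)

end IngletonProperty

section IsometricExtender

variable {v}

theorem IngletonProperty.exists_isometric_extender (hna : IsNonarchimedean v)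
    (hI : IngletonProperty v) {E : Type u} [AddCommGroup E] [Module K E] {p : E → ℝ}
    (hp : IsUltraSeminorm v p) (F : Submodule K E) :
    ∃ T : ↥(BddLin v ↥F (fun x : ↥F => p (x : E))) →ₗ[K] ↥(BddLin v E p),
      ∀ f : ↥(BddLin v ↥F (fun x : ↥F => p (x : E))),
        (∀ x : ↥F, (↑(T f) : E →ₗ[K] K) (x : E) = (↑f : ↥F →ₗ[K] K) x) ∧
          opSemin v E p ↑(T f) = opSemin v ↥F (fun x : ↥F => p (x : E)) ↑f := by
  obtain ⟨B, hBF, hB⟩ := hI.exists_bilinear_extension hna hp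
    (n := fun f : BddLin v F _ => opSemin v F _ f) (fun _ => opSemin_nonneg)
    (BddLin v F fun x : F => p x).subtype fun f y => apply_le_opSemin_mul (hp.restrict F) f.2 y
  let T := B.codRestrict (BddLin v E p) fun f => ⟨_, hB f⟩
  refine ⟨T, fun f => ⟨hBF f, le_antisymm (opSemin_le opSemin_nonneg (hB f)) ?_⟩⟩
  refine opSemin_le opSemin_nonneg fun y => ?_
  have hTf := apply_le_opSemin_mul hp (T f).2 y
  rwa [show (T f : E →ₗ[K] K) y = (f : F →ₗ[K] K) y from hBF f y] at hTf

theorem exists_extension_of_isometric_extender {E : Type u} [AddCommGroup E] [Module K E]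
    {p : E → ℝ} (hp : IsUltraSeminorm v p) {F : Submodule K E}
    (T : ↥(BddLin v ↥F (fun x : ↥F => p (x : E))) →ₗ[K] ↥(BddLin v E p))
    (hT : ∀ f : ↥(BddLin v ↥F (fun x : ↥F => p (x : E))),
        (∀ x : ↥F, (↑(T f) : E →ₗ[K] K) (x : E) = (↑f : ↥F →ₗ[K] K) x) ∧
          opSemin v E p ↑(T f) = opSemin v ↥F (fun x : ↥F => p (x : E)) ↑f)
    (f : F →ₗ[K] K) (hf : ∀ x : F, v (f x) ≤ p x) :
    ∃ g : E →ₗ[K] K, (∀ x : F, g x = f x) ∧ ∀ x, v (g x) ≤ p x := by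
  let f' : BddLin v F fun x : F => p x := ⟨f, 1, by simpa using hf⟩
  obtain ⟨hext, hnorm⟩ := hT f'
  refine ⟨T f', hext, fun x => ?_⟩
  have hf'_le : opSemin v F (fun x : F => p x) f ≤ 1 := opSemin_le zero_le_one (by simpa using hf)
  calc v ((T f' : E →ₗ[K] K) x)
      ≤ opSemin v E p (T f') * p x := apply_le_opSemin_mul hp (T f').2 x
    _ ≤ 1 * p x := by rw [hnorm]; exact mul_le_mul_of_nonneg_right hf'_le (hp.nonneg x)
    _ = p x := one_mul _

end IsometricExtender

theorem ingleton_iff_isometric_linear_extender_general (K : Type u) [Field K]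
    (v : AbsoluteValue K ℝ)
    (hna : ∀ x y : K, v (x + y) ≤ max (v x) (v y)) :
    (∀ (E : Type u) [AddCommGroup E] [Module K E] (p : E → ℝ),
        (∀ (c : K) (x : E), p (c • x) = v c * p x) →
        (∀ x y : E, p (x + y) ≤ max (p x) (p y)) →
        ∀ (F : Submodule K E) (f : F →ₗ[K] K), (∀ x : F, v (f x) ≤ p (x : E)) →
          ∃ g : E →ₗ[K] K, (∀ x : F, g (x : E) = f x) ∧ ∀ x : E, v (g x) ≤ p x) ↔
      (∀ (E : Type u) [AddCommGroup E] [Module K E] (p : E → ℝ),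
        (∀ (c : K) (x : E), p (c • x) = v c * p x) →
        (∀ x y : E, p (x + y) ≤ max (p x) (p y)) →
        ∀ F : Submodule K E,
          ∃ T : ↥(BddLin v ↥F (fun x : ↥F => p (x : E))) →ₗ[K] ↥(BddLin v E p),
            ∀ f : ↥(BddLin v ↥F (fun x : ↥F => p (x : E))),
              (∀ x : ↥F, (↑(T f) : E →ₗ[K] K) (x : E) = (↑f : ↥F →ₗ[K] K) x) ∧
                opSemin v E p ↑(T f) =
                  opSemin v ↥F (fun x : ↥F => p (x : E)) ↑f) := by
  constructor
  · intro hI E _ _ p hp₁ hp₂ F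
    exact IngletonProperty.exists_isometric_extender hna (fun E _ _ p hp => hI E p hp.1 hp.2)
      ⟨hp₁, hp₂⟩ F
  · intro hLE E _ _ p hp₁ hp₂ F f hf
    obtain ⟨T, hT⟩ := hLE E p hp₁ hp₂ F
    exact exists_extension_of_isometric_extender ⟨hp₁, hp₂⟩ T hT f hf

/-- Let `(K, v)` be a spherically complete nonarchimedean valued field.
Then Ingleton's statement `I_(K,v)` is equivalent to the isometric linear extender
statement `LE_(K,v)`: for every `K`-vector space `E` equipped with an ultrametric vector
seminorm `p` and every vector subspace `F` of `E`, there exists a `K`-linear map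
`T : BL(F,K) → BL(E,K)` such that, for every bounded linear form `f` on `F`, `T f`
extends `f` and `‖T f‖ = ‖f‖`. -/
theorem ingleton_iff_isometric_linear_extender (K : Type u) [Field K]
    (v : AbsoluteValue K ℝ)
    (hna : ∀ x y : K, v (x + y) ≤ max (v x) (v y))
    (hsc : SphericallyComplete v) :
    (∀ (E : Type u) [AddCommGroup E] [Module K E] (p : E → ℝ),
        (∀ (c : K) (x : E), p (c • x) = v c * p x) →
        (∀ x y : E, p (x + y) ≤ max (p x) (p y)) →
        ∀ (F : Submodule K E) (f : F →ₗ[K] K), (∀ x : F, v (f x) ≤ p (x : E)) →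
          ∃ g : E →ₗ[K] K, (∀ x : F, g (x : E) = f x) ∧ ∀ x : E, v (g x) ≤ p x) ↔
      (∀ (E : Type u) [AddCommGroup E] [Module K E] (p : E → ℝ),
        (∀ (c : K) (x : E), p (c • x) = v c * p x) →
        (∀ x y : E, p (x + y) ≤ max (p x) (p y)) →
        ∀ F : Submodule K E,
          ∃ T : ↥(BddLin v ↥F (fun x : ↥F => p (x : E))) →ₗ[K] ↥(BddLin v E p),
            ∀ f : ↥(BddLin v ↥F (fun x : ↥F => p (x : E))),
              (∀ x : ↥F, (↑(T f) : E →ₗ[K] K) (x : E) = (↑f : ↥F →ₗ[K] K) x) ∧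
                opSemin v E p ↑(T f) =
                  opSemin v ↥F (fun x : ↥F => p (x : E)) ↑f) :=
  ingleton_iff_isometric_linear_extender_general K v hna
end
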